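/- Under the hypotheses of the vectorial fundamental transformation (β satisfying Darboux; ξ_i, X_i solving the direct system; ξ*_i solving the adjoint system; potentials Ω(ξ,ξ*) invertible, Ω(X,ξ*) with ∂Ω(X,ξ*)/∂u_i = X_i ⊗ ξ*_i), the transformed tangent vectors X̂_i := X_i − Ω(X,ξ*) Ω(ξ,ξ*)^{-1} ξ_i satisfy ∂X̂_j/∂u_i = β̂_{ji} X̂_i for i ≠ j, where β̂_{ji} := β_{ji} − ⟨ξ*_i, Ω(ξ,ξ*)^{-1} ξ_j⟩. -/

import Mathlib

open scoped BigOperators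

/-- Partial derivative of a scalar function on `ℝ^N` in the `i`-th coordinate direction. -/
noncomputable def pd {N : ℕ} (i : Fin N) (f : (Fin N → ℝ) → ℝ) (u : Fin N → ℝ) : ℝ :=
  fderiv ℝ f u (Pi.single i 1)

lemma pd_sub {N : ℕ} {i : Fin N} {f g : (Fin N → ℝ) → ℝ} {u : Fin N → ℝ}
    (hf : DifferentiableAt ℝ f u) (hg : DifferentiableAt ℝ g u) :
    pd i (fun v => f v - g v) u = pd i f u - pd i g u := by
  simp [pd, fderiv_fun_sub hf hg]

lemma pd_mul {N : ℕ} {i : Fin N} {f g : (Fin N → ℝ) → ℝ} {u : Fin N → ℝ}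
    (hf : DifferentiableAt ℝ f u) (hg : DifferentiableAt ℝ g u) :
    pd i (fun v => f v * g v) u = pd i f u * g u + f u * pd i g u := by
  simp [pd, fderiv_fun_mul hf hg]; ring

lemma pd_sum {N : ℕ} {i : Fin N} {ι : Type*} {s : Finset ι} {f : ι → (Fin N → ℝ) → ℝ}
    {u : Fin N → ℝ} (hf : ∀ b ∈ s, DifferentiableAt ℝ (f b) u) :
    pd i (fun v => ∑ b ∈ s, f b v) u = ∑ b ∈ s, pd i (f b) u := by
  simp [pd, fderiv_fun_sum hf]

lemma pd_const {N : ℕ} {i : Fin N} {c : ℝ} {u : Fin N → ℝ} :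
    pd i (fun _ => c) u = 0 := by simp [pd]

lemma key {M : ℕ} (βji Xi : ℝ) (R : Fin M → ℝ) (W : Fin M → Fin M → ℝ)
    (p q r : Fin M → ℝ) :
    βji * Xi - ∑ b, ∑ c,
      ((Xi * q b) * W b c * r c
        + R b * (-((∑ d, W b d * p d) * (∑ d, q d * W d c))) * r c
        + R b * W b c * (βji * p c))
    = (βji - ∑ x, ∑ y, q x * W x y * r y) * (Xi - ∑ x, ∑ y, R x * W x y * p y) := by
  set S := ∑ x, ∑ y, q x * W x y * r y with hS
  set T := ∑ x, ∑ y, R x * W x y * p y with hT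
  have h1 : ∑ b, ∑ c, (Xi * q b) * W b c * r c = Xi * S := by
    rw [hS, Finset.mul_sum]
    refine Finset.sum_congr rfl fun b _ => ?_
    rw [Finset.mul_sum]
    exact Finset.sum_congr rfl fun c _ => by ring
  have h2 : ∑ b, ∑ c, R b * (-((∑ d, W b d * p d) * (∑ d, q d * W d c))) * r c
      = -(T * S) := by
    have e1 : ∀ b, ∑ c, R b * (-((∑ d, W b d * p d) * (∑ d, q d * W d c))) * r c
        = -((R b * ∑ d, W b d * p d) * (∑ c, (∑ d, q d * W d c) * r c)) := by
      intro b
      rw [Finset.mul_sum, ← Finset.sum_neg_distrib]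
      exact Finset.sum_congr rfl fun c _ => by ring
    simp_rw [e1]
    rw [Finset.sum_neg_distrib, ← Finset.sum_mul, neg_inj]
    have hTT : ∑ x, R x * ∑ d, W x d * p d = T := by
      rw [hT]
      refine Finset.sum_congr rfl fun b _ => ?_
      rw [Finset.mul_sum]
      exact Finset.sum_congr rfl fun d _ => by ring
    have hSS : ∑ c, (∑ d, q d * W d c) * r c = S := by
      rw [hS, Finset.sum_comm]
      refine Finset.sum_congr rfl fun c _ => ?_
      rw [Finset.sum_mul]
    rw [hTT, hSS]
  have h3 : ∑ b, ∑ c, R b * W b c * (βji * p c) = βji * T := by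
    rw [hT, Finset.mul_sum]
    refine Finset.sum_congr rfl fun b _ => ?_
    rw [Finset.mul_sum]
    exact Finset.sum_congr rfl fun c _ => by ring
  have : ∑ b, ∑ c,
      ((Xi * q b) * W b c * r c
        + R b * (-((∑ d, W b d * p d) * (∑ d, q d * W d c))) * r c
        + R b * W b c * (βji * p c))
      = Xi * S + -(T * S) + βji * T := by
    rw [← h1, ← h2, ← h3, ← Finset.sum_add_distrib, ← Finset.sum_add_distrib]
    refine Finset.sum_congr rfl fun b _ => ?_
    rw [← Finset.sum_add_distrib, ← Finset.sum_add_distrib]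
  rw [this]; ring

theorem transformed_tangent_vectors
    {N M D : ℕ}
    (β : Fin N → Fin N → (Fin N → ℝ) → ℝ)
    (X : Fin N → (Fin N → ℝ) → Fin D → ℝ)
    (ξ : Fin N → (Fin N → ℝ) → Fin M → ℝ)
    (ξs : Fin N → (Fin N → ℝ) → Fin M → ℝ)
    (Ω Ωinv : (Fin N → ℝ) → Fin M → Fin M → ℝ)
    (ΩX : (Fin N → ℝ) → Fin D → Fin M → ℝ)
    (βh : Fin N → Fin N → (Fin N → ℝ) → ℝ)
    (Xh : Fin N → (Fin N → ℝ) → Fin D → ℝ)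
    (hβ : ∀ i j, i ≠ j → ContDiff ℝ (⊤ : ℕ∞) (β i j))
    (hX : ∀ i a, ContDiff ℝ (⊤ : ℕ∞) (fun u => X i u a))
    (hξ : ∀ i a, ContDiff ℝ (⊤ : ℕ∞) (fun u => ξ i u a))
    (hξssm : ∀ i a, ContDiff ℝ (⊤ : ℕ∞) (fun u => ξs i u a))
    (hΩsm : ∀ a b, ContDiff ℝ (⊤ : ℕ∞) (fun u => Ω u a b))
    (hΩinvsm : ∀ a b, ContDiff ℝ (⊤ : ℕ∞) (fun u => Ωinv u a b))
    (hΩXsm : ∀ a b, ContDiff ℝ (⊤ : ℕ∞) (fun u => ΩX u a b))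
    (hDarboux : ∀ i j k, i ≠ j → j ≠ k → i ≠ k → ∀ u : Fin N → ℝ,
      pd k (β i j) u = β i k u * β k j u)
    (hXsys : ∀ i j, i ≠ j → ∀ (u : Fin N → ℝ) (a : Fin D),
      pd i (fun v => X j v a) u = β j i u * X i u a)
    (hdirect : ∀ i j, i ≠ j → ∀ (u : Fin N → ℝ) (a : Fin M),
      pd i (fun v => ξ j v a) u = β j i u * ξ i u a)
    (hadjoint : ∀ i j, i ≠ j → ∀ (u : Fin N → ℝ) (a : Fin M),
      pd i (fun v => ξs j v a) u = β i j u * ξs i u a)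
    (hΩ : ∀ i (u : Fin N → ℝ) (a b : Fin M),
      pd i (fun v => Ω v a b) u = ξ i u a * ξs i u b)
    (hΩX : ∀ i (u : Fin N → ℝ) (a : Fin D) (b : Fin M),
      pd i (fun v => ΩX v a b) u = X i u a * ξs i u b)
    (hinv₁ : ∀ (u : Fin N → ℝ) (a b : Fin M),
      ∑ c, Ω u a c * Ωinv u c b = if a = b then 1 else 0)
    (hinv₂ : ∀ (u : Fin N → ℝ) (a b : Fin M),
      ∑ c, Ωinv u a c * Ω u c b = if a = b then 1 else 0)
    (hβh : ∀ i j (u : Fin N → ℝ),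
      βh j i u = β j i u - ∑ a, ∑ b, ξs i u a * Ωinv u a b * ξ j u b)
    (hXh : ∀ i (u : Fin N → ℝ) (a : Fin D),
      Xh i u a = X i u a - ∑ b, ∑ c, ΩX u a b * Ωinv u b c * ξ i u c) :
    ∀ i j, i ≠ j → ∀ (u : Fin N → ℝ) (a : Fin D),
      pd i (fun v => Xh j v a) u = βh j i u * Xh i u a := by
  intro i j hij u a
  have dX : ∀ k b, DifferentiableAt ℝ (fun v => X k v b) u :=
    fun k b => ((hX k b).differentiable (by simp)).differentiableAt
  have dξ : ∀ k b, DifferentiableAt ℝ (fun v => ξ k v b) u :=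
    fun k b => ((hξ k b).differentiable (by simp)).differentiableAt
  have dΩ : ∀ b c, DifferentiableAt ℝ (fun v => Ω v b c) u :=
    fun b c => ((hΩsm b c).differentiable (by simp)).differentiableAt
  have dΩinv : ∀ b c, DifferentiableAt ℝ (fun v => Ωinv v b c) u :=
    fun b c => ((hΩinvsm b c).differentiable (by simp)).differentiableAt
  have dΩX : ∀ b c, DifferentiableAt ℝ (fun v => ΩX v b c) u :=
    fun b c => ((hΩXsm b c).differentiable (by simp)).differentiableAt
  -- derivative of the inverse potential
  have hΩinv_pd : ∀ (b c : Fin M), pd i (fun v => Ωinv v b c) u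
      = -((∑ d, Ωinv u b d * ξ i u d) * (∑ d, ξs i u d * Ωinv u d c)) := by
    intro b c
    set P : Fin M → ℝ := fun d => pd i (fun v => Ωinv v b d) u with hP
    have h0 : ∀ e : Fin M,
        ∑ d, (P d * Ω u d e + Ωinv u b d * (ξ i u d * ξs i u e)) = 0 := by
      intro e
      have hfun : (fun v => ∑ d, Ωinv v b d * Ω v d e)
          = fun _ => (if b = e then (1:ℝ) else 0) := funext fun v => hinv₂ v b e
      have hz : pd i (fun v => ∑ d, Ωinv v b d * Ω v d e) u = 0 := by
        rw [hfun]; exact pd_const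
      rw [pd_sum (fun d _ => (dΩinv b d).fun_mul (dΩ d e))] at hz
      rw [← hz]
      refine Finset.sum_congr rfl fun d _ => ?_
      rw [pd_mul (dΩinv b d) (dΩ d e), hΩ]
    have h1 : ∀ e : Fin M, ∑ d, P d * Ω u d e
        = -((∑ d, Ωinv u b d * ξ i u d) * ξs i u e) := by
      intro e
      have := h0 e
      rw [Finset.sum_add_distrib] at this
      have h2 : ∑ d, Ωinv u b d * (ξ i u d * ξs i u e)
          = (∑ d, Ωinv u b d * ξ i u d) * ξs i u e := by
        rw [Finset.sum_mul]
        exact Finset.sum_congr rfl fun d _ => by ring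
      linarith [this, h2.symm ▸ this]
    have h3 : P c = ∑ e, (∑ d, P d * Ω u d e) * Ωinv u e c := by
      simp_rw [Finset.sum_mul]
      rw [Finset.sum_comm]
      have h4 : ∀ d, ∑ e, P d * Ω u d e * Ωinv u e c
          = P d * (if d = c then 1 else 0) := by
        intro d
        rw [← hinv₁ u d c, Finset.mul_sum]
        exact Finset.sum_congr rfl fun e _ => by ring
      simp_rw [h4]
      simp
    show P c = _
    rw [h3]
    simp_rw [h1]
    rw [show ∑ e, -((∑ d, Ωinv u b d * ξ i u d) * ξs i u e) * Ωinv u e c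
        = -((∑ d, Ωinv u b d * ξ i u d) * ∑ e, ξs i u e * Ωinv u e c) by
      rw [Finset.mul_sum, ← Finset.sum_neg_distrib]
      exact Finset.sum_congr rfl fun e _ => by ring]
  -- differentiability of summands
  have dterm : ∀ b c, DifferentiableAt ℝ (fun v => ΩX v a b * Ωinv v b c * ξ j v c) u :=
    fun b c => ((dΩX a b).mul (dΩinv b c)).mul (dξ j c)
  have dsum : DifferentiableAt ℝ
      (fun v => ∑ b, ∑ c, ΩX v a b * Ωinv v b c * ξ j v c) u :=
    DifferentiableAt.fun_sum fun b _ => DifferentiableAt.fun_sum fun c _ => dterm b c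
  have hterm : ∀ b c, pd i (fun v => ΩX v a b * Ωinv v b c * ξ j v c) u
      = (X i u a * ξs i u b) * Ωinv u b c * ξ j u c
        + ΩX u a b * (-((∑ d, Ωinv u b d * ξ i u d) * (∑ d, ξs i u d * Ωinv u d c))) * ξ j u c
        + ΩX u a b * Ωinv u b c * (β j i u * ξ i u c) := by
    intro b c
    rw [pd_mul ((dΩX a b).fun_mul (dΩinv b c)) (dξ j c),
      pd_mul (dΩX a b) (dΩinv b c), hΩX, hΩinv_pd, hdirect i j hij]
    ring
  have hfunXh : (fun v => Xh j v a)
      = fun v => X j v a - ∑ b, ∑ c, ΩX v a b * Ωinv v b c * ξ j v c :=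
    funext fun v => hXh j v a
  rw [hfunXh, pd_sub (dX j a) dsum, hXsys i j hij]
  have hdbl : pd i (fun v => ∑ b, ∑ c, ΩX v a b * Ωinv v b c * ξ j v c) u
      = ∑ b, ∑ c, pd i (fun v => ΩX v a b * Ωinv v b c * ξ j v c) u := by
    rw [pd_sum (fun b _ => DifferentiableAt.fun_sum fun c _ => dterm b c)]
    exact Finset.sum_congr rfl fun b _ => pd_sum (fun c _ => dterm b c)
  rw [hdbl]
  simp_rw [hterm]
  rw [hβh, hXh]
  exact key (β j i u) (X i u a) (fun b => ΩX u a b) (Ωinv u)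
    (fun c => ξ i u c) (fun b => ξs i u b) (fun c => ξ j u c)
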